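/- For integers x and y with y ≥ 0, if y⁴ + 4y³ + 2xy² + 4y² + 4xy − 3x² = 0 and y³ + 3y² + 2y − xy − x = 0, then x = y(y + 2) or (y = −1 and 3x² + 2x − 1 = 0). -/
import Mathlib

theorem stmt14 (x y : ℤ) (hy : 0 ≤ y)
    (h1 : y ^ 4 + 4 * y ^ 3 + 2 * x * y ^ 2 + 4 * y ^ 2 + 4 * x * y - 3 * x ^ 2 = 0)
    (h2 : y ^ 3 + 3 * y ^ 2 + 2 * y - x * y - x = 0) :
    x = y * (y + 2) ∨ (y = -1 ∧ 3 * x ^ 2 + 2 * x - 1 = 0) := by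
  left
  have hne : (y + 1) ≠ 0 := by omega
  have h3 : x * (y + 1) = y * (y + 2) * (y + 1) := by ring_nf; linarith
  exact mul_right_cancel₀ hne h3
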